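/- In the same setting, the process $w$ remains a Wiener process with respect to the enlarged filtration $(\mathcal M_t)$: $w$ is an $(\mathcal M_t)$-martingale, i.e. $\mathbb E[(w(t)-w(s))\,\xi]=0$ for every bounded $\mathcal M_s$-measurable $\xi$, and $|w(t)|^2-d\,t$ is an $(\mathcal M_t)$-martingale (equivalently, $(w(t),\theta)^2-|\theta|^2 t$ is a martingale for each $\theta\in\mathbb R^d$). -/

import Mathlib

/-!
Put `𝒢_s = 𝓕^w_s ∨ 𝓕^{w̃}_∞`. Since `η_s` is `𝓕^w_s`-measurable, every generator
`{w̃(u) ∈ Γ, u ≤ η_s}` of `𝓕̃_s` lies in `𝒢_s`, so `𝓜_s ⊆ 𝒢_s`. The increment `w(t) - w(s)` is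
independent of `𝓕^w_s`, and the increment together with `𝓕^w_s` is a functional of `w`, hence
independent of `w̃`; jointly this makes the increment independent of `𝒢_s`. For a bounded
`𝒢_s`-measurable `ξ` both identities then reduce, via
`(w(t),θ)² - (w(s),θ)² = 2 (w(s),θ) (w(t) - w(s),θ) + (w(t) - w(s),θ)²`,
to the centred Gaussian moments `E (w(t) - w(s),θ) = 0` and `E (w(t) - w(s),θ)² = |θ|² (t - s)`.
-/

open MeasureTheory ProbabilityTheory Filter
open scoped RealInnerProductSpace

noncomputable section

variable {Ω : Type} [MeasurableSpace Ω]

/-- A standard one-dimensional Wiener process on `(Ω, P)`. -/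
structure IsWiener1 (P : Measure Ω) (w : ℝ → Ω → ℝ) : Prop where
  meas : ∀ t, Measurable (w t)
  start : ∀ᵐ ω ∂P, w 0 ω = 0
  cont : ∀ᵐ ω ∂P, Continuous fun t => w t ω
  incr_indep : ∀ s t : ℝ, 0 ≤ s → s ≤ t →
    IndepFun (fun ω => w t ω - w s ω) (fun ω (u : Set.Icc (0:ℝ) s) => w u ω) P
  incr_law : ∀ s t : ℝ, 0 ≤ s → s ≤ t →
    Measure.map (fun ω => w t ω - w s ω) P = gaussianReal 0 (Real.toNNReal (t - s))

/-- A standard Wiener process with values in a Euclidean space `E`: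
every projection on a unit vector of an increment is a centered Gaussian of
variance `t - s`, and increments are independent of the past. -/
structure IsWiener {E : Type} [NormedAddCommGroup E] [InnerProductSpace ℝ E]
    [MeasurableSpace E] [BorelSpace E] (P : Measure Ω) (w : ℝ → Ω → E) : Prop where
  meas : ∀ t, Measurable (w t)
  start : ∀ᵐ ω ∂P, w 0 ω = 0
  cont : ∀ᵐ ω ∂P, Continuous fun t => w t ω
  incr_indep : ∀ s t : ℝ, 0 ≤ s → s ≤ t →
    IndepFun (fun ω => w t ω - w s ω) (fun ω (u : Set.Icc (0:ℝ) s) => w u ω) P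
  incr_law : ∀ θ : E, ‖θ‖ = 1 → ∀ s t : ℝ, 0 ≤ s → s ≤ t →
    Measure.map (fun ω => ⟪w t ω - w s ω, θ⟫) P = gaussianReal 0 (Real.toNNReal (t - s))

/-- A standard Wiener process taking values in the hyperplane `S` orthogonal to `ν`. -/
structure IsWienerIn {E : Type} [NormedAddCommGroup E] [InnerProductSpace ℝ E]
    [MeasurableSpace E] [BorelSpace E] (P : Measure Ω) (ν : E) (w : ℝ → Ω → E) : Prop where
  meas : ∀ t, Measurable (w t)
  start : ∀ᵐ ω ∂P, w 0 ω = 0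
  cont : ∀ᵐ ω ∂P, Continuous fun t => w t ω
  mem : ∀ t ω, ⟪w t ω, ν⟫ = 0
  incr_indep : ∀ s t : ℝ, 0 ≤ s → s ≤ t →
    IndepFun (fun ω => w t ω - w s ω) (fun ω (u : Set.Icc (0:ℝ) s) => w u ω) P
  incr_law : ∀ θ : E, ‖θ‖ = 1 → ⟪θ, ν⟫ = 0 → ∀ s t : ℝ, 0 ≤ s → s ≤ t →
    Measure.map (fun ω => ⟪w t ω - w s ω, θ⟫) P = gaussianReal 0 (Real.toNNReal (t - s))

/-- Two processes are independent (as path-valued random variables). -/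
def IndepProc {E F : Type} [MeasurableSpace E] [MeasurableSpace F]
    (P : Measure Ω) (w : ℝ → Ω → E) (w' : ℝ → Ω → F) : Prop :=
  IndepFun (fun ω (t : ℝ) => w t ω) (fun ω (t : ℝ) => w' t ω) P

/-- The natural filtration `F^w_t = σ{w(u), 0 ≤ u ≤ t}` of a process `w`. -/
def natFilt {E : Type} [MeasurableSpace E] (w : ℝ → Ω → E) (t : ℝ) : MeasurableSpace Ω :=
  ⨆ u ∈ Set.Icc (0:ℝ) t, MeasurableSpace.comap (w u) inferInstance

/-- The σ-algebra `F̃_t = σ{ {w̃(s) ∈ Γ} ∩ {η_t ≥ s} : s ≥ 0, Γ Borel }`. -/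
def tildeFilt {E : Type} [MeasurableSpace E] (wt : ℝ → Ω → E) (η : ℝ → Ω → ℝ) (t : ℝ) :
    MeasurableSpace Ω :=
  MeasurableSpace.generateFrom
    {A | ∃ s : ℝ, 0 ≤ s ∧ ∃ Γ : Set E, MeasurableSet Γ ∧
      A = {ω | wt s ω ∈ Γ ∧ s ≤ η t ω}}

/-- The enlarged filtration `M_t = F^w_t ∨ F̃_t`. -/
def MFilt {E F : Type} [MeasurableSpace E] [MeasurableSpace F]
    (w : ℝ → Ω → E) (wt : ℝ → Ω → F) (η : ℝ → Ω → ℝ) (t : ℝ) : MeasurableSpace Ω :=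
  natFilt w t ⊔ tildeFilt wt η t

/-- `η` is a continuous nondecreasing process, adapted to the natural filtration of `w`,
starting at `0`. -/
structure NiceEta {E : Type} [MeasurableSpace E] (P : Measure Ω) (w : ℝ → Ω → E)
    (η : ℝ → Ω → ℝ) : Prop where
  adapted : ∀ t : ℝ, 0 ≤ t → Measurable[natFilt w t] (η t)
  cont : ∀ᵐ ω ∂P, Continuous fun t => η t ω
  mono : ∀ᵐ ω ∂P, Monotone fun t => η t ω
  zero : ∀ᵐ ω ∂P, η 0 ω = 0

/-- `(x¹, η)` is a skew Brownian motion pair with parameter `q`, driven by the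
one-dimensional Wiener process `w1` and started at `a`: `x¹(t) = a + q η_t + w¹(t)`
and `η` is the symmetric local time of `x¹` at `0`. -/
structure IsSkewLT (P : Measure Ω) (q : ℝ) (w1 : ℝ → Ω → ℝ) (a : ℝ)
    (x1 : ℝ → Ω → ℝ) (η : ℝ → Ω → ℝ) : Prop where
  adapted_x : ∀ t : ℝ, 0 ≤ t → Measurable[natFilt w1 t] (x1 t)
  adapted_eta : ∀ t : ℝ, 0 ≤ t → Measurable[natFilt w1 t] (η t)
  cont : ∀ᵐ ω ∂P, Continuous fun t => η t ω
  mono : ∀ᵐ ω ∂P, Monotone fun t => η t ω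
  zero : ∀ᵐ ω ∂P, η 0 ω = 0
  eqn : ∀ t : ℝ, 0 ≤ t → ∀ᵐ ω ∂P, x1 t ω = a + q * η t ω + w1 t ω
  localTime : ∀ t : ℝ, 0 ≤ t → ∀ᵐ ω ∂P,
    Tendsto (fun ε : ℝ =>
        (1 / (2 * ε)) * ∫ τ in (0:ℝ)..t, (if |x1 τ ω| ≤ ε then (1:ℝ) else 0))
      (nhdsWithin 0 (Set.Ioi 0)) (nhds (η t ω))

/-- Orthogonal projection on the hyperplane orthogonal to the unit vector `ν`. -/
def projS {E : Type} [NormedAddCommGroup E] [InnerProductSpace ℝ E] (ν : E) (v : E) : E :=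
  v - ⟪v, ν⟫ • ν

/-- `x` solves, on `[s, ∞)`, the SDE
`x(t) = ξ + ∫_s^t (qν + α(xˢ(τ))) dη_τ + ∫_s^t β̃(xˢ(τ)) dζ_τ + w(t) - w(s)`,
the two integrals being understood as limits in probability of left Riemann sums
(Lebesgue–Stieltjes resp. Itô integrals). -/
structure SolvesFrom {E : Type} [NormedAddCommGroup E] [InnerProductSpace ℝ E]
    [MeasurableSpace E] [BorelSpace E]
    (P : Measure Ω) (Mfil : ℝ → MeasurableSpace Ω) (ν : E) (q : ℝ)
    (α : E → E) (βt : E → E →L[ℝ] E)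
    (w : ℝ → Ω → E) (η : ℝ → Ω → ℝ) (ζ : ℝ → Ω → E)
    (s : ℝ) (ξ : Ω → E) (x : ℝ → Ω → E) : Prop where
  init : ∀ᵐ ω ∂P, x s ω = ξ ω
  adapted : ∀ t : ℝ, s ≤ t → Measurable[Mfil t] (x t)
  cont : ∀ᵐ ω ∂P, ContinuousOn (fun t => x t ω) (Set.Ici s)
  eqn : ∀ t : ℝ, s ≤ t → ∃ A M : Ω → E,
    TendstoInMeasure P
      (fun n ω => ∑ k ∈ Finset.range n,
        (η (s + ((k:ℝ)+1) * (t - s) / n) ω - η (s + (k:ℝ) * (t - s) / n) ω) •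
          (q • ν + α (projS ν (x (s + (k:ℝ) * (t - s) / n) ω)))) atTop A ∧
    TendstoInMeasure P
      (fun n ω => ∑ k ∈ Finset.range n,
        (βt (projS ν (x (s + (k:ℝ) * (t - s) / n) ω)))
          (ζ (s + ((k:ℝ)+1) * (t - s) / n) ω - ζ (s + (k:ℝ) * (t - s) / n) ω)) atTop M ∧
    ∀ᵐ ω ∂P, x t ω = ξ ω + A ω + M ω + (w t ω - w s ω)

open scoped NNReal

/-- `𝓕^w_∞`, generated by the whole path of `w`. -/
def pathSigmaAlgebra {E : Type} [MeasurableSpace E] (w : ℝ → Ω → E) : MeasurableSpace Ω :=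
  MeasurableSpace.comap (fun ω t => w t ω) MeasurableSpace.pi

section Independence

variable {α : Type*} {m₁ m₂ m₃ mα : MeasurableSpace α} {P : Measure α} [IsProbabilityMeasure P]

theorem indep_sup_right_of_indep_of_indep_sup
    (h₁ : m₁ ≤ mα) (h₂ : m₂ ≤ mα) (h₃ : m₃ ≤ mα)
    (h₁₂ : Indep m₁ m₂ P) (h₁₂₃ : Indep (m₁ ⊔ m₂) m₃ P) : Indep m₁ (m₂ ⊔ m₃) P := by
  -- `m₂ ⊔ m₃` is generated by the π-system of intersections `A ∩ B`, `A ∈ m₂`, `B ∈ m₃`.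
  let p : Set (Set α) :=
    {u | ∃ A, MeasurableSet[m₂] A ∧ ∃ B, MeasurableSet[m₃] B ∧ u = A ∩ B}
  have hp_pi : IsPiSystem p := by
    rintro _ ⟨A, hA, B, hB, rfl⟩ _ ⟨A', hA', B', hB', rfl⟩ -
    exact ⟨A ∩ A', hA.inter hA', B ∩ B', hB.inter hB', Set.inter_inter_inter_comm ..⟩
  have hp_gen : m₂ ⊔ m₃ = MeasurableSpace.generateFrom p := by
    refine le_antisymm (sup_le ?_ ?_) (MeasurableSpace.generateFrom_le ?_)
    · exact fun A hA => MeasurableSpace.measurableSet_generateFrom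
        ⟨A, hA, Set.univ, MeasurableSet.univ, (Set.inter_univ A).symm⟩
    · exact fun B hB => MeasurableSpace.measurableSet_generateFrom
        ⟨Set.univ, MeasurableSet.univ, B, hB, (Set.univ_inter B).symm⟩
    · rintro _ ⟨A, hA, B, hB, rfl⟩
      exact (le_sup_left (b := m₃) _ hA).inter (le_sup_right (a := m₂) _ hB)
  refine IndepSets.indep h₁ (sup_le h₂ h₃) (@MeasurableSpace.isPiSystem_measurableSet α m₁) hp_pi
    (@MeasurableSpace.generateFrom_measurableSet α m₁).symm hp_gen ?_
  rw [IndepSets_iff]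
  rintro C _ hC ⟨A, hA, B, hB, rfl⟩
  have hC' : MeasurableSet[m₁ ⊔ m₂] C := le_sup_left (b := m₂) _ hC
  have hA' : MeasurableSet[m₁ ⊔ m₂] A := le_sup_right (a := m₁) _ hA
  rw [← Set.inter_assoc, (Indep_iff _ _ _).1 h₁₂₃ _ _ (hC'.inter hA') hB,
    (Indep_iff _ _ _).1 h₁₂ _ _ hC hA, (Indep_iff _ _ _).1 h₁₂₃ _ _ hA' hB, mul_assoc]

end Independence

section Moments

variable {α : Type*} {G mα : MeasurableSpace α} {P : Measure α}

theorem ProbabilityTheory.HasLaw.integral_eq_zero_of_gaussianReal {X : α → ℝ} {v : ℝ≥0}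
    (hX : HasLaw X (gaussianReal 0 v) P) : ∫ ω, X ω ∂P = 0 := by
  rw [hX.integral_eq, integral_id_gaussianReal]

theorem ProbabilityTheory.HasLaw.integral_sq_of_gaussianReal {X : α → ℝ} {v : ℝ≥0}
    (hX : HasLaw X (gaussianReal 0 v) P) : ∫ ω, X ω ^ 2 ∂P = v := by
  rw [← variance_of_integral_eq_zero hX.aemeasurable hX.integral_eq_zero_of_gaussianReal,
    hX.variance_eq, variance_id_gaussianReal]

theorem integral_mul_eq_zero_of_indep [IsProbabilityMeasure P] {X ξ : α → ℝ} (hG : G ≤ mα)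
    (hind : Indep (MeasurableSpace.comap X inferInstance) G P) (hX : AEStronglyMeasurable X P)
    (hmean : ∫ ω, X ω ∂P = 0) (hξ : Measurable[G] ξ) : ∫ ω, ξ ω * X ω ∂P = 0 := by
  have hXξ : IndepFun X ξ P := indep_of_indep_of_le_right hind hξ.comap_le
  rw [hXξ.symm.integral_fun_mul_eq_mul_integral (hξ.mono hG le_rfl).aestronglyMeasurable hX,
    hmean, mul_zero]

theorem integral_mul_sq_add_sub_eq_zero_of_indep [IsProbabilityMeasure P] {X Y ξ : α → ℝ}
    {σ2 C : ℝ} (hG : G ≤ mα) (hind : Indep (MeasurableSpace.comap X inferInstance) G P)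
    (hX : MemLp X 2 P) (hmean : ∫ ω, X ω ∂P = 0) (hvar : ∫ ω, X ω ^ 2 ∂P = σ2)
    (hY : Measurable[G] Y) (hYint : Integrable Y P) (hξ : Measurable[G] ξ)
    (hC : ∀ ω, |ξ ω| ≤ C) :
    ∫ ω, ((Y ω + X ω) ^ 2 - Y ω ^ 2 - σ2) * ξ ω ∂P = 0 := by
  have hξm : Measurable ξ := hξ.mono hG le_rfl
  have hξbdd : ∀ᵐ ω ∂P, ‖ξ ω‖ ≤ C := ae_of_all _ hC
  have hξint : Integrable ξ P := (integrable_const C).mono' hξm.aestronglyMeasurable hξbdd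
  have hξY : IndepFun X (fun ω => ξ ω * Y ω) P :=
    indep_of_indep_of_le_right hind (hξ.mul hY).comap_le
  have hX2ξ : IndepFun (fun ω => X ω ^ 2) ξ P :=
    indep_of_indep_of_le_right (indep_of_indep_of_le_left hind
      ((Measurable.of_comap_le le_rfl).pow_const 2).comap_le) hξ.comap_le
  have hXm := hX.aestronglyMeasurable
  have hξYX : Integrable (fun ω => ξ ω * Y ω * X ω) P :=
    hξY.symm.integrable_mul (hYint.bdd_mul hξm.aestronglyMeasurable hξbdd)
      (hX.integrable one_le_two)
  have hξX2 : Integrable (fun ω => ξ ω * X ω ^ 2) P :=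
    hX.integrable_sq.bdd_mul hξm.aestronglyMeasurable hξbdd
  calc ∫ ω, ((Y ω + X ω) ^ 2 - Y ω ^ 2 - σ2) * ξ ω ∂P
      = ∫ ω, 2 * (ξ ω * Y ω * X ω) + ξ ω * X ω ^ 2 - σ2 * ξ ω ∂P := by
        congr 1; ext ω; ring
    _ = 2 * ((∫ ω, ξ ω * Y ω ∂P) * ∫ ω, X ω ∂P) + (∫ ω, X ω ^ 2 ∂P) * ∫ ω, ξ ω ∂P
          - σ2 * ∫ ω, ξ ω ∂P := by
        have hsum : Integrable (fun ω => 2 * (ξ ω * Y ω * X ω) + ξ ω * X ω ^ 2) P :=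
          (hξYX.const_mul 2).add hξX2
        rw [integral_sub hsum (hξint.const_mul σ2),
          integral_add (hξYX.const_mul 2) hξX2, integral_const_mul, integral_const_mul,
          hξY.symm.integral_fun_mul_eq_mul_integral
            ((hξm.mul (hY.mono hG le_rfl)).aestronglyMeasurable) hXm]
        simp_rw [mul_comm (ξ _) (X _ ^ 2)]
        rw [hX2ξ.integral_fun_mul_eq_mul_integral (hXm.pow 2) hξm.aestronglyMeasurable]
    _ = 0 := by rw [hmean, hvar]; ring

end Moments

section NaturalFiltration

variable {α E : Type} [MeasurableSpace E] {w : ℝ → α → E}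

theorem natFilt_le [mα : MeasurableSpace α] (hw : ∀ t, Measurable (w t)) (t : ℝ) :
    natFilt w t ≤ mα :=
  iSup₂_le fun u _ => (hw u).comap_le

theorem measurable_natFilt {s t : ℝ} (hs : 0 ≤ s) (hst : s ≤ t) : Measurable[natFilt w t] (w s) :=
  Measurable.of_comap_le <|
    le_biSup (fun u => MeasurableSpace.comap (w u) inferInstance) ⟨hs, hst⟩

theorem natFilt_le_comap_restrict (t : ℝ) :
    natFilt w t ≤ MeasurableSpace.comap (fun ω (u : Set.Icc (0:ℝ) t) => w u ω)
      MeasurableSpace.pi := by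
  refine iSup₂_le fun u hu => ?_
  have hpath : Measurable[MeasurableSpace.comap (fun ω (u : Set.Icc (0:ℝ) t) => w u ω)
      MeasurableSpace.pi] (fun ω (u : Set.Icc (0:ℝ) t) => w u ω) :=
    Measurable.of_comap_le le_rfl
  exact ((measurable_pi_apply (⟨u, hu⟩ : Set.Icc (0:ℝ) t)).comp hpath).comap_le

theorem measurable_pathSigmaAlgebra (u : ℝ) : Measurable[pathSigmaAlgebra w] (w u) :=
  (measurable_pi_apply u).comp (Measurable.of_comap_le le_rfl : Measurable[pathSigmaAlgebra w] _)

theorem natFilt_le_pathSigmaAlgebra (t : ℝ) : natFilt w t ≤ pathSigmaAlgebra w :=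
  iSup₂_le fun u _ => (measurable_pathSigmaAlgebra u).comap_le

theorem MFilt_le_natFilt_sup_pathSigmaAlgebra {F : Type} [MeasurableSpace F]
    {wt : ℝ → α → F} {η : ℝ → α → ℝ} {s : ℝ} (hη : Measurable[natFilt w s] (η s)) :
    MFilt w wt η s ≤ natFilt w s ⊔ pathSigmaAlgebra wt := by
  refine sup_le le_sup_left (MeasurableSpace.generateFrom_le ?_)
  rintro _ ⟨u, -, Γ, hΓ, rfl⟩
  exact (le_sup_right (a := natFilt w s) _ (measurable_pathSigmaAlgebra u hΓ)).inter
    (le_sup_left (b := pathSigmaAlgebra wt) _ (hη measurableSet_Ici))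

end NaturalFiltration

theorem integral_smul_eq_zero_of_forall_inner {α E : Type*} [NormedAddCommGroup E]
    [InnerProductSpace ℝ E] [CompleteSpace E] {mα : MeasurableSpace α} {P : Measure α}
    {ξ : α → ℝ} {D : α → E}
    (h : ∀ θ : E, ∫ ω, ξ ω * ⟪D ω, θ⟫ ∂P = 0) : ∫ ω, ξ ω • D ω ∂P = 0 := by
  by_cases hint : Integrable (fun ω => ξ ω • D ω) P
  · refine integral_eq_zero_of_forall_integral_inner_eq_zero ℝ _ hint fun θ => ?_
    simpa only [real_inner_smul_right, real_inner_comm θ] using h θ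
  · exact integral_undef hint

section Wiener

variable {E : Type} [NormedAddCommGroup E] [InnerProductSpace ℝ E] [MeasurableSpace E]
  [BorelSpace E]

theorem Measurable.inner_sub_const {α : Type*} {m : MeasurableSpace α} {f g : α → E}
    (hf : Measurable[m] f) (hg : Measurable[m] g) (θ : E) :
    Measurable[m] fun ω => ⟪f ω - g ω, θ⟫ := by
  have hθ : Measurable fun v : E => ⟪v, θ⟫ := (continuous_id.inner continuous_const).measurable
  simp_rw [inner_sub_left]
  exact (hθ.comp hf).sub (hθ.comp hg)

variable {P : Measure Ω} [IsProbabilityMeasure P] {w : ℝ → Ω → E} {s t : ℝ}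

theorem IsWiener.hasLaw_inner_increment (hw : IsWiener P w) (θ : E) (hs : 0 ≤ s) (hst : s ≤ t) :
    HasLaw (fun ω => ⟪w t ω - w s ω, θ⟫) (gaussianReal 0 (‖θ‖₊ ^ 2 * (t - s).toNNReal)) P := by
  rcases eq_or_ne θ 0 with rfl | hθ
  · simpa [gaussianReal_zero_var] using hasLaw_dirac_of_ae_eq (P := P) (ae_of_all _ fun _ => rfl)
  have hunit : ‖‖θ‖⁻¹ • θ‖ = 1 := norm_smul_inv_norm hθ
  have hX : HasLaw (fun ω => ⟪w t ω - w s ω, ‖θ‖⁻¹ • θ⟫) (gaussianReal 0 (t - s).toNNReal) P :=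
    ⟨((hw.meas t).inner_sub_const (hw.meas s) _).aemeasurable, hw.incr_law _ hunit s t hs hst⟩
  convert gaussianReal_const_mul hX ‖θ‖ using 2
  · rw [real_inner_smul_right, ← mul_assoc, mul_inv_cancel₀ (norm_ne_zero_iff.2 hθ), one_mul]
  · simp
  · ext; simp

theorem IsWiener.integrable_inner (hw : IsWiener P w) (θ : E) (hs : 0 ≤ s) :
    Integrable (fun ω => ⟪w s ω, θ⟫) P := by
  refine (hw.hasLaw_inner_increment θ le_rfl hs).hasGaussianLaw.integrable.congr ?_
  filter_upwards [hw.start] with ω h0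
  simp [h0]

/- Stated direction by direction: without second countability of `E`, the vector increment
`w t - w s` need not be measurable. -/
theorem IsWiener.indep_inner_increment_natFilt_sup {F : Type} [MeasurableSpace F]
    {wt : ℝ → Ω → F} (hw : IsWiener P w) (hwt : ∀ t, Measurable (wt t))
    (hind : IndepProc P w wt) (θ : E) (hs : 0 ≤ s) (hst : s ≤ t) :
    Indep (MeasurableSpace.comap (fun ω => ⟪w t ω - w s ω, θ⟫) inferInstance)
      (natFilt w s ⊔ pathSigmaAlgebra wt) P := by
  have hθ : Measurable fun v : E => ⟪v, θ⟫ := (continuous_id.inner continuous_const).measurable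
  have hpast : Indep (MeasurableSpace.comap (fun ω => ⟪w t ω - w s ω, θ⟫) inferInstance)
      (natFilt w s) P :=
    indep_of_indep_of_le_right ((hw.incr_indep s t hs hst).comp hθ measurable_id)
      (natFilt_le_comap_restrict s)
  have hpath : Indep (MeasurableSpace.comap (fun ω => ⟪w t ω - w s ω, θ⟫) inferInstance ⊔
      natFilt w s) (pathSigmaAlgebra wt) P :=
    indep_of_indep_of_le_left hind <| sup_le
      ((measurable_pathSigmaAlgebra t).inner_sub_const (measurable_pathSigmaAlgebra s) θ).comap_le
      (natFilt_le_pathSigmaAlgebra s)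
  exact indep_sup_right_of_indep_of_indep_sup ((hw.meas t).inner_sub_const (hw.meas s) θ).comap_le
    (natFilt_le hw.meas s) (measurable_pi_lambda _ hwt).comap_le hpast hpath

end Wiener

/-- `w` remains a Wiener process with respect to the enlarged filtration
`(M_t)`: it is an `(M_t)`-martingale, and for each `θ` the process `(w(t),θ)² - ‖θ‖² t` is an
`(M_t)`-martingale. -/
theorem wiener_remains_wiener_wrt_enlarged_filtration
    {E F : Type} [NormedAddCommGroup E] [InnerProductSpace ℝ E] [MeasurableSpace E] [BorelSpace E]
    [CompleteSpace E]
    [NormedAddCommGroup F] [InnerProductSpace ℝ F] [MeasurableSpace F] [BorelSpace F]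
    (P : Measure Ω) [IsProbabilityMeasure P]
    (w : ℝ → Ω → E) (wt : ℝ → Ω → F) (η : ℝ → Ω → ℝ)
    (hw : IsWiener P w) (hwt : IsWiener P wt) (hind : IndepProc P w wt)
    (hη : NiceEta P w η) :
    ∀ s t : ℝ, 0 ≤ s → s ≤ t → ∀ ξ : Ω → ℝ,
      Measurable[MFilt w wt η s] ξ → (∃ C, ∀ ω, |ξ ω| ≤ C) →
      (∫ ω, ξ ω • (w t ω - w s ω) ∂P = 0) ∧
      ∀ θ : E,
        ∫ ω, ((⟪w t ω, θ⟫ ^ 2 - ‖θ‖ ^ 2 * t) - (⟪w s ω, θ⟫ ^ 2 - ‖θ‖ ^ 2 * s)) * ξ ω ∂P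
          = 0 := by
  intro s t hs hst ξ hξ ⟨C, hC⟩
  have hG : natFilt w s ⊔ pathSigmaAlgebra wt ≤ ‹MeasurableSpace Ω› :=
    sup_le (natFilt_le hw.meas s) (measurable_pi_lambda _ hwt.meas).comap_le
  have hξG : Measurable[natFilt w s ⊔ pathSigmaAlgebra wt] ξ :=
    hξ.mono (MFilt_le_natFilt_sup_pathSigmaAlgebra (hη.adapted s hs)) le_rfl
  have hindep θ := hw.indep_inner_increment_natFilt_sup hwt.meas hind θ hs hst
  have hlaw θ := hw.hasLaw_inner_increment θ hs hst
  refine ⟨integral_smul_eq_zero_of_forall_inner fun θ => integral_mul_eq_zero_of_indep hG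
    (hindep θ) (hlaw θ).aemeasurable.aestronglyMeasurable
    (hlaw θ).integral_eq_zero_of_gaussianReal hξG, fun θ => ?_⟩
  have hY : Measurable[natFilt w s ⊔ pathSigmaAlgebra wt] fun ω => ⟪w s ω, θ⟫ :=
    (continuous_id.inner continuous_const).measurable.comp
      ((measurable_natFilt hs le_rfl).mono le_sup_left le_rfl)
  have hvar : ∫ ω, ⟪w t ω - w s ω, θ⟫ ^ 2 ∂P = ‖θ‖ ^ 2 * (t - s) := by
    rw [(hlaw θ).integral_sq_of_gaussianReal]
    simp [Real.coe_toNNReal _ (sub_nonneg.2 hst)]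
  calc _ = ∫ ω, ((⟪w s ω, θ⟫ + ⟪w t ω - w s ω, θ⟫) ^ 2 - ⟪w s ω, θ⟫ ^ 2 - ‖θ‖ ^ 2 * (t - s))
          * ξ ω ∂P := by
        congr 1; ext ω; rw [inner_sub_left]; ring
    _ = 0 := integral_mul_sq_add_sub_eq_zero_of_indep hG (hindep θ)
        (hlaw θ).hasGaussianLaw.memLp_two (hlaw θ).integral_eq_zero_of_gaussianReal hvar hY
        (hw.integrable_inner θ hs) hξG hC
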